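/- Every associative Lyndon-Shirshov word u admits a unique bracketing (u) satisfying: (i) every bracketed sub-word corresponds to an ALSW, (ii) if (u) = ((v)(w)) then both (v) and (w) satisfy the conditions, and (iii) if (v) = ((v₁)(v₂)) then v₂ ≤ w lexicographically; moreover this bracketing is given by the standard factorization [u] = [[v][w]] with w the longest ALSW proper suffix of u. -/

import Mathlib

open List

/-- The lexicographic order used by Shirshov: a word is *greater* than any of its
proper extensions (`w > w ++ t` for `t ≠ []`), and otherwise words are compared
letterwise by the order on the alphabet.  `LSLt u v` means `u < v`. -/
def LSLt {X : Type*} [LinearOrder X] : List X → List X → Prop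
  | _ :: _, [] => True
  | [], _ => False
  | a :: u, b :: v => a < b ∨ (a = b ∧ LSLt u v)

/-- `u ≤ v` in the Shirshov lexicographic order. -/
def LSLe {X : Type*} [LinearOrder X] (u v : List X) : Prop := u = v ∨ LSLt u v

/-- The degree-lexicographic order: compare first by length, then lexicographically. -/
def DegLt {X : Type*} [LinearOrder X] (u v : List X) : Prop :=
  u.length < v.length ∨ (u.length = v.length ∧ LSLt u v)

/-- `≤` in the degree-lexicographic order. -/
def DegLe {X : Type*} [LinearOrder X] (u v : List X) : Prop := u = v ∨ DegLt u v

/-- An associative Lyndon–Shirshov word: a nonempty word `u` such that `vw > wv`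
(lexicographically) for every factorization `u = vw` into nonempty parts. -/
def IsALSW {X : Type*} [LinearOrder X] (u : List X) : Prop :=
  u ≠ [] ∧ ∀ v w : List X, v ≠ [] → w ≠ [] → u = v ++ w → LSLt (w ++ v) (v ++ w)

/-- The underlying associative word of a non-associative word (binary bracketing). -/
def wordOf {X : Type*} : FreeMagma X → List X
  | .of x => [x]
  | .mul a b => wordOf a ++ wordOf b

/-- `w` is the longest proper suffix of `u` which is an ALSW. -/
def LongestALSWProperSuffix {X : Type*} [LinearOrder X] (u w : List X) : Prop :=
  IsALSW w ∧ (∃ v : List X, v ≠ [] ∧ u = v ++ w) ∧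
    ∀ w' : List X, IsALSW w' → (∃ v' : List X, v' ≠ [] ∧ u = v' ++ w') →
      w'.length ≤ w.length

/-- The standard (up-to-down) bracketing of an ALSW: `[x] = x` and
`[u] = [[v][w]]` where `w` is the longest proper ALSW suffix of `u`. -/
inductive IsStdBracketing {X : Type*} [LinearOrder X] : List X → FreeMagma X → Prop
  | of (x : X) : IsStdBracketing [x] (.of x)
  | mul {v w : List X} {tv tw : FreeMagma X} :
      IsALSW (v ++ w) → LongestALSWProperSuffix (v ++ w) w →
      IsStdBracketing v tv → IsStdBracketing w tw →
      IsStdBracketing (v ++ w) (tv * tw)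

/-- A non-associative Lyndon–Shirshov word, via Shirshov's conditions:
the underlying word is an ALSW, both halves are NLSWs, and the right factor of
the left half is `≤` the right half. -/
inductive IsNLSW {X : Type*} [LinearOrder X] : FreeMagma X → Prop
  | of (x : X) : IsNLSW (.of x)
  | mul {tv tw : FreeMagma X} :
      IsNLSW tv → IsNLSW tw → IsALSW (wordOf (tv * tw)) →
      (∀ t₁ t₂ : FreeMagma X, tv = t₁ * t₂ → LSLe (wordOf t₂) (wordOf tw)) →
      IsNLSW (tv * tw)

/-! Shirshov's order is not compatible with appending on the right (`[a, b] < [a]`, but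
`[a, b, c] < [a, c]` fails when `b > c`), whereas its letterwise part `SLt` is; in terms of `SLt`,
an ALSW is a nonempty word greater than each of its proper suffixes.

Let `w` be the longest ALSW proper suffix of an ALSW `u = v w`. A minimal counterexample shows
that every proper suffix of `u` is `≤ w`; from this `v` is an ALSW, and if `v = v₁ w₁` is the
standard factorization of `v` then `w₁ ≤ w`, for otherwise `w₁ w` would be a longer ALSW suffix.
So the standard bracketing satisfies Shirshov's conditions. Conversely, if `u = v' w'` is the top
splitting of an NLSW and `v' = v₁ w₁` is standard by induction, every proper suffix `m` of `v'`
is `≤ w₁ ≤ w'`, which rules out an ALSW suffix `m w'` of `u`: so `w'` is the longest one, and the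
NLSW is the standard bracketing, which is unique because the longest suffix is. -/

section Order
variable {X : Type*} [LinearOrder X]

/-- The letterwise part of `LSLt`: `x` and `y` differ at a position present in both, where `x`
has the smaller letter. -/
def SLt : List X → List X → Prop
  | a :: u, b :: v => a < b ∨ (a = b ∧ SLt u v)
  | _, _ => False

@[simp]
theorem not_slt_nil_left (y : List X) : ¬ SLt [] y := by cases y <;> simp [SLt]

@[simp]
theorem not_slt_nil_right (x : List X) : ¬ SLt x [] := by cases x <;> simp [SLt]

theorem SLt.trans : ∀ {x y z : List X}, SLt x y → SLt y z → SLt x z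
  | [], _, _, h, _ | _ :: _, [], _, h, _ => by simp at h
  | _ :: _, _ :: _, [], _, h => by simp at h
  | a :: x, b :: y, c :: z, h₁, h₂ => by
    simp only [SLt] at h₁ h₂ ⊢
    rcases h₁ with h₁ | ⟨rfl, h₁⟩ <;> rcases h₂ with h₂ | ⟨rfl, h₂⟩
    · exact Or.inl (h₁.trans h₂)
    · exact Or.inl h₁
    · exact Or.inl h₂
    · exact Or.inr ⟨rfl, h₁.trans h₂⟩

theorem not_slt_self_append : ∀ x t : List X, ¬ SLt x (x ++ t)
  | [], t => not_slt_nil_left t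
  | a :: x, t => by simpa [SLt] using not_slt_self_append x t

theorem slt_irrefl (x : List X) : ¬ SLt x x := by
  simpa using not_slt_self_append x []

theorem SLt.append : ∀ {x y : List X}, SLt x y → ∀ c d : List X, SLt (x ++ c) (y ++ d)
  | [], _, h, _, _ | _ :: _, [], h, _, _ => by simp at h
  | a :: x, b :: y, h, c, d => by
    simp only [SLt, cons_append] at h ⊢
    rcases h with h | ⟨rfl, h⟩
    · exact Or.inl h
    · exact Or.inr ⟨rfl, h.append c d⟩

theorem slt_append_left_iff : ∀ (p : List X) {x y : List X}, SLt (p ++ x) (p ++ y) ↔ SLt x y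
  | [], _, _ => Iff.rfl
  | a :: p, _, _ => by simpa [SLt] using slt_append_left_iff p

theorem slt_append_cases : ∀ x y c d : List X, SLt (x ++ c) (y ++ d) →
    SLt x y ∨ (∃ r, y = x ++ r ∧ SLt c (r ++ d)) ∨ (∃ r, x = y ++ r ∧ SLt (r ++ c) d)
  | [], y, _, _, h => Or.inr (Or.inl ⟨y, rfl, h⟩)
  | a :: x, [], _, _, h => Or.inr (Or.inr ⟨a :: x, rfl, h⟩)
  | a :: x, b :: y, c, d, h => by
    simp only [cons_append, SLt] at h
    rcases h with h | ⟨rfl, h⟩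
    · exact Or.inl (Or.inl h)
    · rcases slt_append_cases x y c d h with h' | ⟨r, rfl, h'⟩ | ⟨r, rfl, h'⟩
      · exact Or.inl (Or.inr ⟨rfl, h'⟩)
      · exact Or.inr (Or.inl ⟨r, rfl, h'⟩)
      · exact Or.inr (Or.inr ⟨r, rfl, h'⟩)

theorem lslt_iff : ∀ x y : List X, LSLt x y ↔ SLt x y ∨ ∃ r, r ≠ [] ∧ x = y ++ r
  | [], y => by cases y <;> simp [LSLt]
  | a :: x, [] => by simp [LSLt]
  | a :: x, b :: y => by
    simp only [LSLt, SLt, lslt_iff x y, cons_append, cons.injEq]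
    grind

theorem SLt.lslt {x y : List X} (h : SLt x y) : LSLt x y := (lslt_iff x y).2 (Or.inl h)

theorem LSLt.slt_of_length_le {x y : List X} (h : LSLt x y) (hl : x.length ≤ y.length) :
    SLt x y := by
  rcases (lslt_iff x y).1 h with h | ⟨r, hr, rfl⟩
  · exact h
  · simp_all

theorem lslt_irrefl (x : List X) : ¬ LSLt x x :=
  fun h => slt_irrefl x (h.slt_of_length_le le_rfl)

theorem LSLt.trans {x y z : List X} (h₁ : LSLt x y) (h₂ : LSLt y z) : LSLt x z := by
  rcases (lslt_iff x y).1 h₁ with h₁ | ⟨r, hr, rfl⟩ <;>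
    rcases (lslt_iff y z).1 h₂ with h₂ | ⟨s, hs, rfl⟩
  · exact (h₁.trans h₂).lslt
  · rcases slt_append_cases x z [] s (by simpa using h₁) with h | ⟨q, rfl, h⟩ | ⟨q, rfl, -⟩
    · exact h.lslt
    · simp at h
    · rcases eq_or_ne q [] with rfl | hq
      · exact absurd h₁ (by simpa using not_slt_self_append z s)
      · exact (lslt_iff _ _).2 (Or.inr ⟨q, hq, rfl⟩)
  · simpa using (h₂.append r []).lslt
  · exact (lslt_iff _ _).2 (Or.inr ⟨s ++ r, by simp [hr], by simp⟩)

theorem LSLt.asymm {x y : List X} (h : LSLt x y) : ¬ LSLt y x :=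
  fun h' => lslt_irrefl x (h.trans h')

theorem lslt_trichotomy : ∀ x y : List X, LSLt x y ∨ x = y ∨ LSLt y x
  | [], [] => Or.inr (Or.inl rfl)
  | [], _ :: _ => Or.inr (Or.inr trivial)
  | _ :: _, [] => Or.inl trivial
  | a :: x, b :: y => by
    rcases lt_trichotomy a b with h | rfl | h
    · exact Or.inl (Or.inl h)
    · rcases lslt_trichotomy x y with h | rfl | h
      · exact Or.inl (Or.inr ⟨rfl, h⟩)
      · exact Or.inr (Or.inl rfl)
      · exact Or.inr (Or.inr (Or.inr ⟨rfl, h⟩))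
    · exact Or.inr (Or.inr (Or.inl h))

theorem LSLt.trans_slt {x y z : List X} (h₁ : LSLt x y) (h₂ : SLt y z) : SLt x z := by
  rcases (lslt_iff x y).1 h₁ with h | ⟨r, -, rfl⟩
  · exact h.trans h₂
  · simpa using h₂.append r []

theorem LSLe.trans_slt {x y z : List X} (h₁ : LSLe x y) (h₂ : SLt y z) : SLt x z := by
  rcases h₁ with rfl | h₁
  exacts [h₂, h₁.trans_slt h₂]

theorem LSLe.trans {x y z : List X} (h₁ : LSLe x y) (h₂ : LSLe y z) : LSLe x z := by
  rcases h₁ with rfl | h₁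
  · exact h₂
  rcases h₂ with rfl | h₂
  exacts [Or.inr h₁, Or.inr (h₁.trans h₂)]

end Order

theorem exists_of_append_eq_append_of_length_le {α : Type*} {v z p w : List α}
    (he : v ++ z = p ++ w) (hl : z.length ≤ w.length) : ∃ m, w = m ++ z ∧ v = p ++ m := by
  rcases append_eq_append_iff.1 he with ⟨a, rfl, rfl⟩ | ⟨m, rfl, rfl⟩
  · obtain rfl : a = [] := by simpa using hl
    exact ⟨[], by simp, by simp⟩
  · exact ⟨m, rfl, rfl⟩

section ALSW
variable {X : Type*} [LinearOrder X]

theorem isALSW_singleton (x : X) : IsALSW [x] := by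
  refine ⟨cons_ne_nil x [], fun v w hv hw he => ?_⟩
  rcases append_eq_singleton_iff.1 he.symm with ⟨rfl, -⟩ | ⟨-, rfl⟩ <;> contradiction

theorem IsALSW.suffix_slt {u v w : List X} (hu : IsALSW u) (hv : v ≠ []) (hw : w ≠ [])
    (he : u = v ++ w) : SLt w u := by
  subst he
  have hlt : SLt (w ++ v) ((v ++ w) ++ []) := by
    simpa using (hu.2 v w hv hw rfl).slt_of_length_le (by simp; omega)
  rcases slt_append_cases w (v ++ w) v [] hlt with h | ⟨r, hr, h⟩ | ⟨r, hr, -⟩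
  · exact h
  · -- `v w = w r` with `v < r` letterwise, whereas `r w < w r` since `u` is an ALSW
    have hr0 : r ≠ [] := by rintro rfl; simp at h
    have hrw := (hu.2 w r hw hr0 hr).slt_of_length_le (by simp; omega)
    rw [← hr] at hrw
    exact absurd ((by simpa using h.append w w : SLt (v ++ w) (r ++ w)).trans hrw) (slt_irrefl _)
  · have := congrArg length hr
    have := length_pos_iff.2 hv
    simp only [length_append] at *
    omega

theorem IsALSW.of_suffix_slt {u : List X} (hne : u ≠ [])
    (h : ∀ v w : List X, v ≠ [] → w ≠ [] → u = v ++ w → SLt w u) : IsALSW u := by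
  refine ⟨hne, fun v w hv hw he => ?_⟩
  subst he
  simpa using ((h v w hv hw rfl).append v []).lslt

theorem IsALSW.append {a b : List X} (ha : IsALSW a) (hb : IsALSW b) (hab : LSLt b a) :
    IsALSW (a ++ b) := by
  refine IsALSW.of_suffix_slt (by simp [ha.1]) fun p s hp hs he => ?_
  rcases le_or_gt s.length b.length with hsb | hbs
  · obtain ⟨m, rfl, -⟩ := exists_of_append_eq_append_of_length_le he.symm hsb
    have hsa : LSLt s a := by
      rcases eq_or_ne m [] with rfl | hm
      · simpa using hab
      · exact (hb.suffix_slt hm hs rfl).lslt.trans hab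
    rcases (lslt_iff s a).1 hsa with h | ⟨r, hr, rfl⟩
    · simpa using h.append [] (m ++ s)
    · rw [slt_append_left_iff]
      exact hb.suffix_slt (v := m ++ a) (by simp [ha.1]) hr (by simp)
  · obtain ⟨m, rfl, rfl⟩ := exists_of_append_eq_append_of_length_le he hbs.le
    have hm : m ≠ [] := by rintro rfl; simp at hbs
    exact (ha.suffix_slt hp hm rfl).append b b

end ALSW

section LongestSuffix
variable {X : Type*} [LinearOrder X]

theorem exists_longestALSWProperSuffix {u : List X} (hu : 2 ≤ u.length) :
    ∃ w, LongestALSWProperSuffix u w := by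
  classical
  have hex : ∃ j, 0 < j ∧ j < u.length ∧ IsALSW (u.drop j) :=
    ⟨u.length - 1, by omega, by omega, by
      rw [drop_length_sub_one (ne_nil_of_length_pos (by omega))]; exact isALSW_singleton _⟩
  obtain ⟨j, ⟨hj0, hju, hjA⟩, hmin⟩ : ∃ j, (0 < j ∧ j < u.length ∧ IsALSW (u.drop j)) ∧
      ∀ k < j, ¬ (0 < k ∧ k < u.length ∧ IsALSW (u.drop k)) :=
    ⟨Nat.find hex, Nat.find_spec hex, fun k hk => Nat.find_min hex hk⟩
  refine ⟨u.drop j, hjA, ⟨u.take j, ?_, (take_append_drop j u).symm⟩, ?_⟩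
  · exact ne_of_apply_ne length (by rw [length_take, length_nil]; omega)
  · rintro w hw ⟨v, hv, rfl⟩
    have : j ≤ v.length := not_lt.1 fun hlt =>
      hmin _ hlt ⟨length_pos_iff.2 hv, by simp [length_pos_iff.2 hw.1], by simpa using hw⟩
    simp only [length_drop, length_append] at hju ⊢
    omega

namespace LongestALSWProperSuffix

theorem unique {u w w' : List X} (h : LongestALSWProperSuffix u w)
    (h' : LongestALSWProperSuffix u w') : w = w' := by
  obtain ⟨hw, ⟨v, hv, rfl⟩, hmax⟩ := h
  obtain ⟨hw', ⟨v', hv', he⟩, hmax'⟩ := h'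
  exact (append_inj' he (le_antisymm (hmax' w hw ⟨v, hv, rfl⟩) (hmax w' hw' ⟨v', hv', he⟩))).2

theorem lsle_of_suffix {u w : List X} (hw : LongestALSWProperSuffix u w) {p z : List X}
    (hp : p ≠ []) (hz : z ≠ []) (he : u = p ++ z) : LSLe z w := by
  obtain ⟨q, -, hq⟩ := hw.2.1
  rcases le_or_gt z.length w.length with hzw | hwz
  · obtain ⟨m, rfl, -⟩ := exists_of_append_eq_append_of_length_le (he.symm.trans hq) hzw
    rcases eq_or_ne m [] with rfl | hm
    · exact Or.inl (nil_append z).symm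
    · exact Or.inr (hw.1.suffix_slt hm hz rfl).lslt
  · -- a minimal counterexample `z > w` would be an ALSW longer than `w`
    by_contra hzw
    have hwz' : SLt w z := by
      rcases lslt_trichotomy z w with h | h | h
      · exact absurd (Or.inr h) hzw
      · exact absurd (Or.inl h) hzw
      · exact h.slt_of_length_le hwz.le
    have hzA : IsALSW z := IsALSW.of_suffix_slt hz fun p' t hp' ht ht' =>
      (hw.lsle_of_suffix (p := p ++ p') (by simp [hp]) ht (by simp [he, ht'])).trans_slt hwz'
    exact absurd (hw.2.2 z hzA ⟨p, hp, he⟩) (by omega)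
termination_by z.length
decreasing_by subst ht'; simp [length_pos_iff.2 hp']

theorem isALSW_left {u v w : List X} (hu : IsALSW u) (hw : LongestALSWProperSuffix u w)
    (he : u = v ++ w) : IsALSW v := by
  obtain ⟨q, hq, hq'⟩ := hw.2.1
  obtain rfl : v = q := append_cancel_right (he.symm.trans hq')
  subst he
  refine IsALSW.of_suffix_slt hq fun p s hp hs hps => ?_
  have hsw : SLt (s ++ w) (v ++ w) :=
    hu.suffix_slt hp (by simp [hs]) (by rw [hps, append_assoc])
  rcases slt_append_cases s v w w hsw with h | ⟨r, rfl, h⟩ | ⟨r, rfl, -⟩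
  · exact h
  · have := hw.lsle_of_suffix hs (by simp [hw.1.1]) (append_assoc s r w)
    exact absurd (this.trans_slt h) (slt_irrefl _)
  · have := congrArg length hps
    have := length_pos_iff.2 hp
    simp only [length_append] at *
    omega

theorem lsle_of_append {v w₁ w : List X} (hw₁ : LongestALSWProperSuffix v w₁)
    (hw : LongestALSWProperSuffix (v ++ w) w) : LSLe w₁ w := by
  obtain ⟨hw₁A, ⟨v₁, hv₁, rfl⟩, -⟩ := hw₁
  rcases lslt_trichotomy w₁ w with h | h | h
  · exact Or.inr h
  · exact Or.inl h
  · have := hw.2.2 (w₁ ++ w) (hw₁A.append hw.1 h) ⟨v₁, hv₁, by simp⟩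
    simp [hw₁A.1] at this

end LongestALSWProperSuffix

theorem longestALSWProperSuffix_append {v w : List X} (hv : v ≠ []) (hw : IsALSW w)
    (hsuf : ∀ p m : List X, p ≠ [] → m ≠ [] → v = p ++ m → LSLe m w) :
    LongestALSWProperSuffix (v ++ w) w := by
  refine ⟨hw, ⟨v, hv, rfl⟩, fun z hz ⟨p, hp, he⟩ => ?_⟩
  by_contra! hwz
  obtain ⟨m, rfl, rfl⟩ := exists_of_append_eq_append_of_length_le he hwz.le
  have hm : m ≠ [] := by rintro rfl; simp at hwz
  have hwm : SLt w (m ++ w) := hz.suffix_slt hm hw.1 rfl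
  rcases hsuf p m hp hm rfl with rfl | hmw
  · exact not_slt_self_append m m hwm
  · rcases (lslt_iff m w).1 hmw with h | ⟨r, -, rfl⟩
    · exact (hz.2 m w hm hw.1 rfl).asymm (h.append w m).lslt
    · exact not_slt_self_append w (r ++ w) (by simpa using hwm)

end LongestSuffix

section Bracketing

theorem wordOf_ne_nil {X : Type*} : ∀ t : FreeMagma X, wordOf t ≠ []
  | .of x => cons_ne_nil x []
  | .mul a _ => append_ne_nil_of_left_ne_nil (wordOf_ne_nil a) _

@[simp]
theorem wordOf_mul {X : Type*} (a b : FreeMagma X) : wordOf (a * b) = wordOf a ++ wordOf b := rfl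

theorem wordOf_mul_ne_singleton {X : Type*} (a b : FreeMagma X) (x : X) :
    wordOf (a * b) ≠ [x] := by
  intro h
  rcases append_eq_singleton_iff.1 h with ⟨ha, -⟩ | ⟨-, hb⟩
  exacts [wordOf_ne_nil a ha, wordOf_ne_nil b hb]

variable {X : Type*} [LinearOrder X]

theorem IsNLSW.isALSW {t : FreeMagma X} (h : IsNLSW t) : IsALSW (wordOf t) := by
  cases h with
  | of x => exact isALSW_singleton x
  | mul _ _ hA _ => exact hA

namespace IsStdBracketing

theorem wordOf_eq {u : List X} {t : FreeMagma X} (h : IsStdBracketing u t) : wordOf t = u := by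
  induction h with
  | of x => rfl
  | mul _ _ _ _ ihv ihw => rw [← ihv, ← ihw]; rfl

theorem of_mul {u : List X} {t₁ t₂ : FreeMagma X} (h : IsStdBracketing u (t₁ * t₂)) :
    LongestALSWProperSuffix u (wordOf t₂) ∧
      IsStdBracketing (wordOf t₁) t₁ ∧ IsStdBracketing (wordOf t₂) t₂ := by
  cases h with
  | mul _ hL hv hw => rw [hv.wordOf_eq, hw.wordOf_eq]; exact ⟨hL, hv, hw⟩

theorem unique {u : List X} {t₁ t₂ : FreeMagma X} (h₁ : IsStdBracketing u t₁)
    (h₂ : IsStdBracketing u t₂) : t₁ = t₂ := by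
  have hword := h₁.wordOf_eq.trans h₂.wordOf_eq.symm
  induction t₁ generalizing u t₂ with
  | ih1 x => cases t₂ with
    | of y =>
      obtain rfl : x = y := by simpa [wordOf] using hword
      rfl
    | mul c d => exact absurd hword.symm (wordOf_mul_ne_singleton c d x)
  | ih2 a b iha ihb => cases t₂ with
    | of y => exact absurd hword (wordOf_mul_ne_singleton a b y)
    | mul c d =>
      obtain ⟨hL₁, ha, hb⟩ := h₁.of_mul
      obtain ⟨hL₂, hc, hd⟩ := h₂.of_mul
      have hbd := hL₁.unique hL₂
      have hac : wordOf a = wordOf c :=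
        append_cancel_right (hword.trans (congrArg (wordOf c ++ ·) hbd.symm))
      rw [iha ha (hac ▸ hc) hac, ihb hb (hbd ▸ hd) hbd]
      rfl

end IsStdBracketing

theorem IsALSW.exists_isStdBracketing {u : List X} (hu : IsALSW u) :
    ∃ t, IsStdBracketing u t := by
  by_cases hu1 : u.length ≤ 1
  · obtain ⟨x, rfl⟩ : ∃ x, u = [x] :=
      length_eq_one_iff.1 (by have := length_pos_iff.2 hu.1; omega)
    exact ⟨.of x, .of x⟩
  obtain ⟨w, hL⟩ := exists_longestALSWProperSuffix (u := u) (by omega)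
  obtain ⟨v, hv, rfl⟩ := hL.2.1
  have hw : w ≠ [] := hL.1.1
  obtain ⟨tv, hv'⟩ := (hL.isALSW_left hu rfl).exists_isStdBracketing
  obtain ⟨tw, hw'⟩ := hL.1.exists_isStdBracketing
  exact ⟨tv * tw, .mul hu hL hv' hw'⟩
termination_by u.length
decreasing_by all_goals simp [length_pos_iff, *]

theorem IsStdBracketing.isNLSW {u : List X} {t : FreeMagma X} (h : IsStdBracketing u t) :
    IsNLSW t := by
  induction h with
  | of x => exact .of x
  | mul hA hL hv hw ihv ihw =>
    refine .mul ihv ihw (by rwa [wordOf_mul, hv.wordOf_eq, hw.wordOf_eq]) ?_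
    rintro t₁ t₂ rfl
    rw [hw.wordOf_eq]
    exact hv.of_mul.1.lsle_of_append hL

theorem IsNLSW.isStdBracketing {t : FreeMagma X} (h : IsNLSW t) :
    IsStdBracketing (wordOf t) t := by
  induction h with
  | of x => exact .of x
  | @mul tv tw _ htw hA hcond ihv ihw =>
    refine .mul hA (longestALSWProperSuffix_append (wordOf_ne_nil tv) htw.isALSW ?_) ihv ihw
    intro p m hp hm he
    cases tv with
    | of x => exact absurd he.symm (by simp [wordOf, append_eq_singleton_iff, hp, hm])
    | mul t₁ t₂ => exact (ihv.of_mul.1.lsle_of_suffix hp hm he).trans (hcond t₁ t₂ rfl)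

end Bracketing

/-- Every ALSW `u` admits a unique bracketing satisfying
Shirshov's NLSW conditions, and this bracketing is the standard one, given by
the factorization `[u] = [[v][w]]` with `w` the longest proper ALSW suffix. -/
theorem nlsw_exists_unique {X : Type*} [LinearOrder X]
    (u : List X) (hu : IsALSW u) :
    (∃! t : FreeMagma X, IsNLSW t ∧ wordOf t = u) ∧
      ∀ t : FreeMagma X, IsNLSW t → wordOf t = u → IsStdBracketing u t := by
  obtain ⟨t, ht⟩ := hu.exists_isStdBracketing
  have hstd : ∀ t' : FreeMagma X, IsNLSW t' → wordOf t' = u → IsStdBracketing u t' :=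
    fun t' h hw => hw ▸ h.isStdBracketing
  exact ⟨⟨t, ⟨ht.isNLSW, ht.wordOf_eq⟩, fun t' ⟨h, hw⟩ => (hstd t' h hw).unique ht⟩, hstd⟩
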